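/- arXiv:math/0405453 — 4 statements merged into one kernel-verified Lean document; each statement's English description precedes it below -/
import Mathlib

section
/- Let f ∈ K[[x_1,…,x_n]] have order m at 0, and let f' be its strict transform under the chart substitution (x_1,…,x_n) ↦ (x_1, x_1(a_2+x_2),…,x_1(a_n+x_n)), so f(x_1, x_1(a_2+x_2),…) = x_1^m f'(x). Then for every multi-index α with |α| ≤ k ≤ m, the substituted partial derivative (∂^{|α|} f/∂x^α)(x_1, x_1(a_2+x_2),…,x_1(a_n+x_n)) belongs to the ideal x_1^{m−k}·J'_k, where J'_k is the ideal of K[[x]] generated by all partial derivatives of f' of order ≤ k. -/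
/-!
Write `φ` for the chart substitution. By the chain rule, `∂ⱼ(φ g) = x₁ · φ(∂ⱼ g)` for `j ≥ 2`
and `∂₁(φ g) = φ(∂₁ g) + Σⱼ (aⱼ + xⱼ) · φ(∂ⱼ g)`. Induction on `d = |α|` then shows
`φ(∂^α f) = x₁^{m-d} h` with `h ∈ J'_d`: differentiating this identity once more and solving for
`φ(∂ⱼ ∂^α f)` (for `j ≥ 2` by cancelling one factor `x₁`, for `j = 1` using the case `j ≥ 2`)
exhibits it as `x₁^{m-d-1}` times an element of `J'_{d+1}`.
-/

open scoped Classical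

noncomputable def deg {σ : Type} [Fintype σ] (α : σ →₀ ℕ) : ℕ := ∑ i, α i

noncomputable def expBox (σ : Type) [Fintype σ] [DecidableEq σ] (D : ℕ) : Finset (σ →₀ ℕ) :=
  Finset.Iic (Finsupp.equivFunOnFinite.symm fun _ => D)


noncomputable def mySubst {K : Type} [Field K] {σ τ : Type} [Fintype σ] [DecidableEq σ]
    [Fintype τ] (s : σ → MvPowerSeries τ K) (f : MvPowerSeries σ K) : MvPowerSeries τ K :=
  fun β => ∑ α ∈ expBox σ (deg β),
    MvPowerSeries.coeff α f * MvPowerSeries.coeff β (∏ i, s i ^ α i)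

/-- Iterated formal partial derivative `∂^{|a|} f / ∂x^a`. -/
noncomputable def pdMulti {K : Type} [Field K] {σ : Type} [Fintype σ] (a : σ →₀ ℕ)
    (f : MvPowerSeries σ K) : MvPowerSeries σ K :=
  fun β => (((∏ i, Nat.choose (β i + a i) (a i) * Nat.factorial (a i)) : ℕ) : K) *
    MvPowerSeries.coeff (β + a) f

/-- The blow-up chart substitution `x₁ ↦ x₁`, `x_j ↦ x₁·(a_j + x_j)`. -/
noncomputable def chartS {K : Type} [Field K] {n : ℕ} (a : Fin n → K) :
    Fin (n + 1) → MvPowerSeries (Fin (n + 1)) K := fun j =>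
  Fin.cases (MvPowerSeries.X 0)
    (fun k => MvPowerSeries.X 0 *
      ((MvPowerSeries.C (a k) : MvPowerSeries (Fin (n + 1)) K) + MvPowerSeries.X k.succ)) j

theorem Derivation.map_mvPolynomial_aeval {R A σ : Type*} [CommSemiring R] [CommSemiring A]
    [Algebra R A] [Fintype σ] (D : Derivation R A A) (s : σ → A) (p : MvPolynomial σ R) :
    D (MvPolynomial.aeval s p) = ∑ i, MvPolynomial.aeval s (MvPolynomial.pderiv i p) * D (s i) := by
  induction p using MvPolynomial.induction_on with
  | C r => simp
  | add p q hp hq => simp only [map_add, hp, hq, add_mul, Finset.sum_add_distrib]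
  | mul_X p j hp =>
    simp only [map_mul, MvPolynomial.aeval_X, Derivation.leibniz, hp, smul_eq_mul, map_add,
      MvPolynomial.pderiv_X, Pi.single_apply, add_mul, Finset.sum_add_distrib, Finset.mul_sum]
    simp [mul_comm, mul_left_comm]

namespace MvPowerSeries

variable {R σ τ : Type*} [CommRing R]

theorem le_order_sub_truncTotal [Finite σ] (f : MvPowerSeries σ R) (n : ℕ) :
    (n : ℕ∞) ≤ (f - truncTotal n f).order :=
  nat_le_order fun d hd => by simp [coeff_truncTotal _ hd]

theorem le_order_pderiv {f : MvPowerSeries σ R} {n : ℕ} (i : σ) (hf : (n + 1 : ℕ) ≤ f.order) :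
    (n : ℕ∞) ≤ (pderiv R i f).order :=
  nat_le_order fun d hd => by
    rw [coeff_pderiv, coeff_of_lt_order (lt_of_lt_of_le _ hf), zero_mul]
    simpa [map_add] using hd

theorem order_le_order_subst [Finite σ] {s : σ → MvPowerSeries τ R}
    (hs : ∀ i, constantCoeff (s i) = 0) (f : MvPowerSeries σ R) :
    f.order ≤ (subst s f).order :=
  le_trans (le_mul_of_one_le_left' (le_iInf fun i =>
      (one_le_order_iff_constCoeff_eq_zero).mpr (hs i)))
    (le_order_subst (hasSubst_of_constantCoeff_zero hs) f)

theorem degree_le_order_prod_pow [Fintype σ] {s : σ → MvPowerSeries τ R}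
    (hs : ∀ i, constantCoeff (s i) = 0) (d : σ →₀ ℕ) :
    (d.degree : ℕ∞) ≤ (∏ i, s i ^ d i).order := by
  refine le_trans ?_ (le_order_prod _ _)
  rw [Finsupp.degree_eq_sum, Nat.cast_sum]
  exact Finset.sum_le_sum fun i _ => le_order_pow_of_constantCoeff_eq_zero _ (hs i)

theorem pderiv_subst_coe [Fintype σ] (s : σ → MvPowerSeries τ R) (t : τ) (p : MvPolynomial σ R) :
    pderiv R t (subst s (p : MvPowerSeries σ R)) =
      ∑ i, subst s (pderiv R i (p : MvPowerSeries σ R)) * pderiv R t (s i) := by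
  simp only [subst_coe, pderiv_coe]
  exact (pderiv R t).map_mvPolynomial_aeval s p

theorem pderiv_subst [Fintype σ] {s : σ → MvPowerSeries τ R}
    (hs : ∀ i, constantCoeff (s i) = 0) (t : τ) (f : MvPowerSeries σ R) :
    pderiv R t (subst s f) = ∑ i, subst s (pderiv R i f) * pderiv R t (s i) := by
  -- Removing the truncation `p` of `f` in degree `|d| + 2` leaves a remainder `r` of such high
  -- order that it contributes nothing to either side at `d`; for `p` use `pderiv_subst_coe`.
  ext d
  have ha := hasSubst_of_constantCoeff_zero hs
  set p : MvPolynomial σ R := truncTotal (d.degree + 2) f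
  set r := f - p
  have hr := le_order_sub_truncTotal f (d.degree + 2)
  have hlhs : coeff d (pderiv R t (subst s r)) = 0 :=
    coeff_of_lt_order <| lt_of_lt_of_le (by exact_mod_cast d.degree.lt_succ_self) <|
      le_order_pderiv t (hr.trans (order_le_order_subst hs r))
  have hrhs : coeff d (∑ i, subst s (pderiv R i r) * pderiv R t (s i)) = 0 := by
    rw [map_sum]
    refine Finset.sum_eq_zero fun i _ => coeff_of_lt_order ?_
    refine lt_of_lt_of_le ?_ (le_self_add.trans le_order_mul)
    exact lt_of_lt_of_le (by exact_mod_cast d.degree.lt_succ_self)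
      ((le_order_pderiv i hr).trans (order_le_order_subst hs _))
  have hf : f = p + r := (add_sub_cancel _ _).symm
  rw [hf, subst_add ha, map_add, map_add, pderiv_subst_coe, hlhs]
  simp only [map_add, subst_add ha, add_mul, Finset.sum_add_distrib, hrhs]

end MvPowerSeries

open MvPowerSeries
open scoped Nat

theorem deg_eq_degree {σ : Type} [Fintype σ] (α : σ →₀ ℕ) : deg α = α.degree :=
  (Finsupp.degree_eq_sum α).symm

theorem exists_eq_add_single_of_deg_eq_succ {σ : Type} [Fintype σ] {α : σ →₀ ℕ} {d : ℕ}
    (hα : deg α = d + 1) : ∃ β j, deg β = d ∧ α = β + Finsupp.single j 1 := by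
  obtain ⟨j, hj⟩ : ∃ j, α j ≠ 0 := by
    by_contra! h
    simp [deg, h] at hα
  have hle : Finsupp.single j 1 ≤ α := Finsupp.single_le_iff.mpr (Nat.one_le_iff_ne_zero.mpr hj)
  refine ⟨α - Finsupp.single j 1, j, ?_, (tsub_add_cancel_of_le hle).symm⟩
  have hsum := congrArg Finsupp.degree (tsub_add_cancel_of_le hle)
  rw [map_add, Finsupp.degree_single] at hsum
  rw [deg_eq_degree] at hα ⊢
  omega

theorem mem_expBox {σ : Type} [Fintype σ] [DecidableEq σ] {D : ℕ} {α : σ →₀ ℕ} :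
    α ∈ expBox σ D ↔ ∀ i, α i ≤ D := by
  simp [expBox, Finsupp.le_def]

theorem mySubst_eq_subst {K : Type} [Field K] {σ τ : Type} [Fintype σ] [DecidableEq σ]
    [Fintype τ] {s : σ → MvPowerSeries τ K} (hs : ∀ i, constantCoeff (s i) = 0)
    (f : MvPowerSeries σ K) : mySubst s f = subst s f := by
  ext β
  rw [coeff_subst (hasSubst_of_constantCoeff_zero hs)]
  simp only [Finsupp.prod_fintype _ _ (fun _ => pow_zero _), smul_eq_mul]
  refine (finsum_eq_sum_of_support_subset _ fun α hα => mem_expBox.mpr fun i => ?_).symm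
  have hne : coeff β (∏ i, s i ^ α i) ≠ 0 := right_ne_zero_of_mul hα
  have hdeg : α.degree ≤ β.degree := by
    by_contra! h
    exact hne (coeff_of_lt_order ((Nat.cast_lt.mpr h).trans_le (degree_le_order_prod_pow hs α)))
  exact (α.le_degree i).trans (deg_eq_degree β ▸ hdeg)

theorem Nat.choose_mul_factorial_add_one (a b : ℕ) :
    (b + (a + 1)).choose (a + 1) * (a + 1)! = (b + 1) * ((b + 1 + a).choose a * a !) := by
  simp only [mul_comm _ (Nat.factorial _), ← Nat.descFactorial_eq_factorial_mul_choose]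
  rw [show b + (a + 1) = b + 1 + a by omega, Nat.descFactorial_succ, Nat.add_sub_cancel]

section pdMulti

variable {K : Type} [Field K] {σ : Type} [Fintype σ]

theorem coeff_pdMulti (α β : σ →₀ ℕ) (f : MvPowerSeries σ K) :
    coeff β (pdMulti α f) =
      ((∏ i, (β i + α i).choose (α i) * (α i)! : ℕ) : K) * coeff (β + α) f :=
  rfl

theorem pdMulti_zero (f : MvPowerSeries σ K) : pdMulti 0 f = f := by
  ext β
  simp [coeff_pdMulti]

theorem pdMulti_add_single (α : σ →₀ ℕ) (j : σ) (f : MvPowerSeries σ K) :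
    pdMulti (α + Finsupp.single j 1) f = pderiv K j (pdMulti α f) := by
  ext β
  set e : σ →₀ ℕ := Finsupp.single j 1
  have hfactor : ∀ i, (β i + (α + e) i).choose ((α + e) i) * ((α + e) i)! =
      (if i = j then β j + 1 else 1) * (((β + e) i + α i).choose (α i) * (α i)!) := by
    intro i
    rcases eq_or_ne i j with rfl | hij
    · simpa [e] using Nat.choose_mul_factorial_add_one (α i) (β i)
    · simp [e, hij]
  rw [coeff_pderiv, coeff_pdMulti, coeff_pdMulti, Finset.prod_congr rfl fun i _ => hfactor i,
    Finset.prod_mul_distrib, Finset.prod_ite_eq' Finset.univ j, if_pos (Finset.mem_univ j),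
    add_right_comm, ← add_assoc]
  push_cast
  ring

end pdMulti

section derivIdeal

variable {K : Type} [Field K] {σ : Type} [Fintype σ]

noncomputable def derivIdeal (f : MvPowerSeries σ K) (k : ℕ) : Ideal (MvPowerSeries σ K) :=
  Ideal.span {g | ∃ β, deg β ≤ k ∧ g = pdMulti β f}

theorem pdMulti_mem_derivIdeal (f : MvPowerSeries σ K) {k : ℕ} {β : σ →₀ ℕ} (hβ : deg β ≤ k) :
    pdMulti β f ∈ derivIdeal f k :=
  Ideal.subset_span ⟨β, hβ, rfl⟩

theorem derivIdeal_mono (f : MvPowerSeries σ K) {k l : ℕ} (hkl : k ≤ l) :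
    derivIdeal f k ≤ derivIdeal f l :=
  Ideal.span_mono fun _ ⟨β, hβ, hg⟩ => ⟨β, hβ.trans hkl, hg⟩

theorem pderiv_mem_derivIdeal_succ (f : MvPowerSeries σ K) (j : σ) {k : ℕ}
    {g : MvPowerSeries σ K} (hg : g ∈ derivIdeal f k) : pderiv K j g ∈ derivIdeal f (k + 1) := by
  induction hg using Submodule.span_induction with
  | mem g hg =>
    obtain ⟨β, hβ, rfl⟩ := hg
    rw [← pdMulti_add_single]
    refine pdMulti_mem_derivIdeal f ?_
    rw [deg_eq_degree, map_add, Finsupp.degree_single, ← deg_eq_degree]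
    omega
  | zero => simp
  | add x y _ _ hx hy => simpa using add_mem hx hy
  | smul r x hx hx' =>
    rw [smul_eq_mul, Derivation.leibniz, smul_eq_mul, smul_eq_mul]
    exact add_mem (Ideal.mul_mem_left _ _ hx')
      (Ideal.mul_mem_right _ _ (derivIdeal_mono f k.le_succ hx))

end derivIdeal

section chart

variable {K : Type} [Field K] {n : ℕ} (a : Fin n → K)

theorem chartS_zero : chartS a 0 = X 0 := rfl

theorem chartS_succ (u : Fin n) : chartS a u.succ = X 0 * (C (a u) + X u.succ) := rfl

theorem constantCoeff_chartS (i : Fin (n + 1)) : constantCoeff (chartS a i) = 0 := by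
  cases i using Fin.cases <;> simp [chartS_zero, chartS_succ]

theorem pderiv_succ_subst_chartS (u : Fin n) (g : MvPowerSeries (Fin (n + 1)) K) :
    pderiv K u.succ (subst (chartS a) g) = subst (chartS a) (pderiv K u.succ g) * X 0 := by
  rw [pderiv_subst (constantCoeff_chartS a), Fin.sum_univ_succ]
  simp [chartS_zero, chartS_succ, Derivation.leibniz, pderiv_X, Pi.single_apply]

theorem pderiv_zero_subst_chartS (g : MvPowerSeries (Fin (n + 1)) K) :
    pderiv K 0 (subst (chartS a) g) = subst (chartS a) (pderiv K 0 g) +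
      ∑ u : Fin n, subst (chartS a) (pderiv K u.succ g) * (C (a u) + X u.succ) := by
  rw [pderiv_subst (constantCoeff_chartS a), Fin.sum_univ_succ]
  simp [chartS_zero, chartS_succ, Derivation.leibniz]

theorem subst_chartS_pderiv_succ {g h : MvPowerSeries (Fin (n + 1)) K} {c : ℕ}
    (hg : subst (chartS a) g = X 0 ^ (c + 1) * h) (u : Fin n) :
    subst (chartS a) (pderiv K u.succ g) = X 0 ^ c * pderiv K u.succ h := by
  have hchain := pderiv_succ_subst_chartS a u g
  simp only [hg, Derivation.leibniz, pderiv_pow, pderiv_X_of_ne (Fin.succ_ne_zero u).symm,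
    mul_zero, add_zero, smul_eq_mul] at hchain
  have hX : (X 0 : MvPowerSeries (Fin (n + 1)) K) ∈ nonZeroDivisors _ :=
    X_mem_nonzeroDivisors
  rw [← mul_cancel_right_mem_nonZeroDivisors hX, ← hchain]
  ring

theorem subst_chartS_pderiv_zero {g h : MvPowerSeries (Fin (n + 1)) K} {c : ℕ}
    (hg : subst (chartS a) g = X 0 ^ (c + 1) * h) :
    subst (chartS a) (pderiv K 0 g) =
      X 0 ^ c * (((c + 1 : ℕ) : MvPowerSeries (Fin (n + 1)) K) * h + X 0 * pderiv K 0 h -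
        ∑ u : Fin n, pderiv K u.succ h * (C (a u) + X u.succ)) := by
  have hchain := pderiv_zero_subst_chartS a g
  simp only [hg, subst_chartS_pderiv_succ a hg, Derivation.leibniz, pderiv_pow, pderiv_X_self,
    smul_eq_mul, Nat.add_sub_cancel, mul_one, mul_assoc, ← Finset.mul_sum] at hchain
  linear_combination -hchain

end chart

section strictTransform

variable {K : Type} [Field K] {n : ℕ} {a : Fin n → K} {f f' : MvPowerSeries (Fin (n + 1)) K}
  {m : ℕ}

theorem subst_chartS_pdMulti_eq (hst : subst (chartS a) f = X 0 ^ m * f') {d : ℕ} (hdm : d ≤ m)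
    {α : Fin (n + 1) →₀ ℕ} (hα : deg α = d) :
    ∃ h ∈ derivIdeal f' d, subst (chartS a) (pdMulti α f) = X 0 ^ (m - d) * h := by
  induction d generalizing α with
  | zero =>
    obtain rfl : α = 0 := by
      rw [deg_eq_degree, Finsupp.degree_eq_zero_iff] at hα
      exact hα
    exact ⟨f', by simpa [pdMulti_zero] using pdMulti_mem_derivIdeal f' (β := 0) (by simp [deg]),
      by rw [pdMulti_zero, hst, Nat.sub_zero]⟩
  | succ d ih =>
    obtain ⟨β, j, hβ, rfl⟩ := exists_eq_add_single_of_deg_eq_succ hα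
    obtain ⟨h, hJ, hg⟩ := ih (by omega) hβ
    rw [show m - d = m - (d + 1) + 1 by omega] at hg
    rw [pdMulti_add_single]
    cases j using Fin.cases with
    | zero =>
      refine ⟨_, sub_mem (add_mem ?_ ?_) (sum_mem fun u _ => ?_), subst_chartS_pderiv_zero a hg⟩
      · exact Ideal.mul_mem_left _ _ (derivIdeal_mono f' d.le_succ hJ)
      · exact Ideal.mul_mem_left _ _ (pderiv_mem_derivIdeal_succ f' 0 hJ)
      · exact Ideal.mul_mem_right _ _ (pderiv_mem_derivIdeal_succ f' _ hJ)
    | succ u => exact ⟨_, pderiv_mem_derivIdeal_succ f' _ hJ, subst_chartS_pderiv_succ a hg u⟩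

end strictTransform

theorem derivative_strict_transform_mem_general {K : Type} [Field K] {n : ℕ}
    (f f' : MvPowerSeries (Fin (n + 1)) K) (m : ℕ)
    (a : Fin n → K)
    (hst : mySubst (chartS a) f = MvPowerSeries.X 0 ^ m * f')
    (k : ℕ) (hk : k ≤ m) (α : Fin (n + 1) →₀ ℕ) (hα : deg α ≤ k) :
    mySubst (chartS a) (pdMulti α f) ∈
      Ideal.span {(MvPowerSeries.X 0 : MvPowerSeries (Fin (n + 1)) K) ^ (m - k)} *
      Ideal.span {g : MvPowerSeries (Fin (n + 1)) K |
        ∃ β, deg β ≤ k ∧ g = pdMulti β f'} := by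
  rw [mySubst_eq_subst (constantCoeff_chartS a)] at hst ⊢
  obtain ⟨h, hJ, he⟩ := subst_chartS_pdMulti_eq hst (hα.trans hk) rfl
  rw [he, show m - deg α = m - k + (k - deg α) by omega, pow_add, mul_assoc]
  exact Ideal.mul_mem_mul (Ideal.mem_span_singleton_self _)
    (Ideal.mul_mem_left _ _ (derivIdeal_mono f' hα hJ))

theorem derivative_strict_transform_mem {K : Type} [Field K] [CharZero K] {n : ℕ}
    (f f' : MvPowerSeries (Fin (n + 1)) K) (hf : f ≠ 0) (m : ℕ)
    (hm₁ : ∃ α, deg α = m ∧ MvPowerSeries.coeff α f ≠ 0)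
    (hm₂ : ∀ α, MvPowerSeries.coeff α f ≠ 0 → m ≤ deg α)
    (a : Fin n → K)
    (hst : mySubst (chartS a) f = MvPowerSeries.X 0 ^ m * f')
    (k : ℕ) (hk : k ≤ m) (α : Fin (n + 1) →₀ ℕ) (hα : deg α ≤ k) :
    mySubst (chartS a) (pdMulti α f) ∈
      Ideal.span {(MvPowerSeries.X 0 : MvPowerSeries (Fin (n + 1)) K) ^ (m - k)} *
      Ideal.span {g : MvPowerSeries (Fin (n + 1)) K |
        ∃ β, deg β ≤ k ∧ g = pdMulti β f'} :=
  derivative_strict_transform_mem_general f f' m a hst k hk α hα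
end

section
/- Let V ⊆ K^l be an irreducible affine variety with coordinate ring K[V], and let F_1,…,F_s ∈ K[V][[t,X_1,…,X_n]] generate an ideal R with diagram of initial exponents N(R) ⊂ ℕ^{n+1}. For v ∈ V, let R_v ⊆ K[[t,X]] be the ideal generated by the evaluations F_j(v,t,X). Then: (1) for every v ∈ V, N(R) ≤ N(R_v) in the total order on diagrams; (2) there is a proper subvariety V' ⊊ V such that N(R_v) = N(R) for all v ∈ V \ V', and for each vertex β of N(R) there exists G ∈ R with ν(G) = β and ν(G(v,t,X)) = β for all v ∈ V \ V'. -/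
/-!
Order exponents by `fKey` and fix `δ`. Only the finitely many exponents `γ` with
`fKey γ ≤ fKey δ` matter for the part of a diagram below `δ`: truncating there, the elements of
`N(R)` below `δ` are the leading indices of the span of the truncated rows `X^γ F_j`, and by
Gaussian elimination their number is the dimension of that span, i.e. the rank of a matrix with
entries in `K[V]` (computed over the fraction field). Evaluating at `v` cannot raise the rank,
since a nonvanishing minor at `v` is a nonvanishing minor of the generic matrix. These counting
inequalities for all `δ` give `N(R) ≤ N(R_v)`, and they force `N(R_v) = N(R)` as soon as
`N(R) ⊆ N(R_v)`. The latter holds off the hypersurface `f₀ = 0`, where `f₀` is the product of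
the leading coefficients of chosen witnesses `G` of the finitely many vertices of `N(R)`.
-/

open scoped Classical

/-- The key `(|α|, α_0, α_1, …, α_n)` (first entry of the exponent is the `t`
variable); keys are compared lexicographically. -/
noncomputable def fKey {n : ℕ} (α : Fin (n + 1) →₀ ℕ) : List ℕ :=
  (deg α) :: List.ofFn fun i => α i

/-- Initial exponent predicate: `β = ν(g)`. -/
def IsInitExp {B : Type} [CommRing B] {n : ℕ} (g : MvPowerSeries (Fin (n + 1)) B)
    (β : Fin (n + 1) →₀ ℕ) : Prop :=
  MvPowerSeries.coeff β g ≠ 0 ∧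
    ∀ γ, MvPowerSeries.coeff γ g ≠ 0 → fKey β ≤ fKey γ

/-- Diagram of initial exponents of an ideal. -/
def diagOf {B : Type} [CommRing B] {n : ℕ} (J : Ideal (MvPowerSeries (Fin (n + 1)) B)) :
    Set (Fin (n + 1) →₀ ℕ) :=
  {β | ∃ g ∈ J, g ≠ 0 ∧ IsInitExp g β}

/-- `β` is a vertex of the diagram `N`. -/
def IsVertex {n : ℕ} (N : Set (Fin (n + 1) →₀ ℕ)) (β : Fin (n + 1) →₀ ℕ) : Prop :=
  β ∈ N ∧ ∀ γ ∈ N, (∃ b, β = γ + b) → γ = β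

def VertexList {n : ℕ} (N : Set (Fin (n + 1) →₀ ℕ)) (l : List (Fin (n + 1) →₀ ℕ)) : Prop :=
  l.Pairwise (fun a b => fKey a < fKey b) ∧
  N = (⋃ s ∈ l.toFinset, {x | ∃ b, x = s + b}) ∧
  ∀ s ∈ l.toFinset, s ∉ ⋃ t ∈ l.toFinset.erase s, {x | ∃ b, x = t + b}

noncomputable def padKey {n : ℕ} (l : List (Fin (n + 1) →₀ ℕ)) (j : ℕ) : WithTop (List ℕ) :=
  (l[j]?).elim ⊤ fun a => (fKey a : WithTop (List ℕ))

def listDiagLT {n : ℕ} (l₁ l₂ : List (Fin (n + 1) →₀ ℕ)) : Prop :=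
  ∃ j : ℕ, (∀ j' < j, padKey l₁ j' = padKey l₂ j') ∧ padKey l₁ j < padKey l₂ j

/-- The total order on diagrams, via the `∞`-padded vertex sequences. -/
def DiagLE {n : ℕ} (N₁ N₂ : Set (Fin (n + 1) →₀ ℕ)) : Prop :=
  ∃ l₁ l₂, VertexList N₁ l₁ ∧ VertexList N₂ l₂ ∧ (listDiagLT l₁ l₂ ∨ l₁ = l₂)

theorem List.lex_zipWith_add_right {l₁ l₂ : List ℕ} (h : List.Lex (· < ·) l₁ l₂) {l₃ : List ℕ}
    (hl₃ : l₃.length = l₂.length) :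
    List.Lex (· < ·) (List.zipWith (· + ·) l₁ l₃) (List.zipWith (· + ·) l₂ l₃) := by
  induction h generalizing l₃ with
  | nil =>
    obtain _ | _ := l₃
    exacts [absurd hl₃ (by simp), List.Lex.nil]
  | rel hab =>
    obtain _ | _ := l₃
    exacts [absurd hl₃ (by simp), List.Lex.rel (Nat.add_lt_add_right hab _)]
  | cons _ ih =>
    obtain _ | _ := l₃
    exacts [absurd hl₃ (by simp), List.Lex.cons (ih (by simpa using hl₃))]

namespace BierstoneMilman

variable {n : ℕ}

section KeyOrder

variable {a b : Fin (n + 1) →₀ ℕ}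

theorem fKey_injective : Function.Injective (fKey (n := n)) := by
  intro a b h
  simp only [fKey, List.cons.injEq] at h
  ext i
  exact congrFun (List.ofFn_injective h.2) i

theorem fKey_lt_of_deg_lt (h : deg a < deg b) : fKey a < fKey b :=
  List.Lex.rel h

theorem deg_le_of_fKey_le (h : fKey a ≤ fKey b) : deg a ≤ deg b :=
  le_of_not_gt fun hlt => not_lt_of_ge h (fKey_lt_of_deg_lt hlt)

theorem deg_lt_deg (h : a < b) : deg a < deg b := by
  obtain ⟨i, hi⟩ := (Finsupp.lt_def.mp h).2
  exact Finset.sum_lt_sum (fun j _ => Finsupp.le_def.mp h.le j) ⟨i, Finset.mem_univ i, hi⟩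

theorem fKey_lt_fKey (h : a < b) : fKey a < fKey b :=
  fKey_lt_of_deg_lt (deg_lt_deg h)

theorem fKey_le_fKey (h : a ≤ b) : fKey a ≤ fKey b := by
  rcases h.eq_or_lt with rfl | hlt
  exacts [le_rfl, (fKey_lt_fKey hlt).le]

theorem fKey_add (a b : Fin (n + 1) →₀ ℕ) :
    fKey (a + b) = List.zipWith (· + ·) (fKey a) (fKey b) := by
  simp only [fKey, deg, List.zipWith_cons_cons, Finsupp.add_apply, Finset.sum_add_distrib]
  congr 1
  apply List.ext_getElem <;> simp [-List.ofFn_succ]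

theorem fKey_add_lt_add_right (c : Fin (n + 1) →₀ ℕ) (h : fKey a < fKey b) :
    fKey (a + c) < fKey (b + c) := by
  rw [fKey_add, fKey_add]
  exact List.lex_zipWith_add_right h (by simp [fKey])

theorem fKey_add_le_add_right (c : Fin (n + 1) →₀ ℕ) (h : fKey a ≤ fKey b) :
    fKey (a + c) ≤ fKey (b + c) := by
  rcases h.eq_or_lt with heq | hlt
  · rw [fKey_injective heq]
  · exact (fKey_add_lt_add_right c hlt).le

theorem finite_setOf_fKey_le (δ : Fin (n + 1) →₀ ℕ) :
    {γ : Fin (n + 1) →₀ ℕ | fKey γ ≤ fKey δ}.Finite := by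
  refine (Set.finite_Iic (Finsupp.equivFunOnFinite.symm fun _ => deg δ)).subset fun γ hγ i => ?_
  calc γ i ≤ deg γ := Finset.single_le_sum (f := fun j => γ j) (by simp) (Finset.mem_univ i)
    _ ≤ deg δ := deg_le_of_fKey_le hγ

theorem exists_fKey_min {S : Set (Fin (n + 1) →₀ ℕ)} (hS : S.Nonempty) :
    ∃ m ∈ S, ∀ x ∈ S, fKey m ≤ fKey x := by
  obtain ⟨γ, hγ⟩ := hS
  obtain ⟨m, hm, hmin⟩ := Set.exists_min_image {x ∈ S | fKey x ≤ fKey γ} fKey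
    ((finite_setOf_fKey_le γ).subset fun _ hx => hx.2) ⟨γ, hγ, le_rfl⟩
  refine ⟨m, hm.1, fun x hx => ?_⟩
  rcases le_total (fKey x) (fKey γ) with hle | hle
  exacts [hmin x ⟨hx, hle⟩, hm.2.trans hle]

noncomputable def keyIic (δ : Fin (n + 1) →₀ ℕ) : Finset (Fin (n + 1) →₀ ℕ) :=
  (finite_setOf_fKey_le δ).toFinset

@[simp]
theorem mem_keyIic {δ x : Fin (n + 1) →₀ ℕ} : x ∈ keyIic δ ↔ fKey x ≤ fKey δ := by
  simp [keyIic]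

theorem injective_fKey_val (δ : Fin (n + 1) →₀ ℕ) :
    Function.Injective fun t : keyIic δ => fKey t.1 :=
  fKey_injective.comp Subtype.val_injective

end KeyOrder

section Diagram

open MvPowerSeries

variable {B B' : Type} [CommRing B] [CommRing B'] {g : MvPowerSeries (Fin (n + 1)) B}
  {β : Fin (n + 1) →₀ ℕ}

theorem _root_.IsInitExp.ne_zero (h : IsInitExp g β) : g ≠ 0 :=
  fun hg => h.1 (by simp [hg])

theorem _root_.IsInitExp.monomial_mul (h : IsInitExp g β) (b : Fin (n + 1) →₀ ℕ) :
    IsInitExp (monomial b 1 * g) (β + b) := by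
  refine ⟨by simpa [coeff_monomial_mul] using h.1, fun γ hγ => ?_⟩
  rw [coeff_monomial_mul] at hγ
  split_ifs at hγ with hbγ
  · simpa [tsub_add_cancel_of_le hbγ] using
      fKey_add_le_add_right b (h.2 (γ - b) (by simpa using hγ))
  · exact absurd rfl hγ

theorem _root_.IsInitExp.map (h : IsInitExp g β) (φ : B →+* B') (hφ : φ (coeff β g) ≠ 0) :
    IsInitExp (map φ g) β := by
  refine ⟨by rwa [coeff_map], fun γ hγ => h.2 γ fun h0 => hγ ?_⟩
  rw [coeff_map, h0, map_zero]

theorem isUpperSet_diagOf (J : Ideal (MvPowerSeries (Fin (n + 1)) B)) :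
    IsUpperSet (diagOf J) := by
  rintro β _ hle ⟨g, hgJ, -, hg⟩
  obtain ⟨b, rfl⟩ := le_iff_exists_add.mp hle
  have hinit := hg.monomial_mul b
  exact ⟨_, J.mul_mem_left _ hgJ, hinit.ne_zero, hinit⟩

variable {s : ℕ} {F : Fin s → MvPowerSeries (Fin (n + 1)) B}

theorem map_mem_span_map (φ : B →+* B') (hg : g ∈ Ideal.span (Set.range F)) :
    map φ g ∈ Ideal.span (Set.range fun j => map φ (F j)) := by
  rw [Set.range_comp' (map φ) F, ← Ideal.map_span]
  exact Ideal.mem_map_of_mem _ hg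

theorem mem_diagOf_map (φ : B →+* B') (hg : g ∈ Ideal.span (Set.range F)) (hβ : IsInitExp g β)
    (hφ : φ (coeff β g) ≠ 0) : β ∈ diagOf (Ideal.span (Set.range fun j => map φ (F j))) :=
  have hinit := hβ.map φ hφ
  ⟨_, map_mem_span_map φ hg, hinit.ne_zero, hinit⟩

end Diagram

section Vertices

variable {N N₁ N₂ : Set (Fin (n + 1) →₀ ℕ)}

theorem isVertex_iff_minimal {β : Fin (n + 1) →₀ ℕ} : IsVertex N β ↔ Minimal (· ∈ N) β := by
  simp only [IsVertex, Minimal, ← le_iff_exists_add]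
  exact and_congr_right fun _ => forall₂_congr fun γ _ =>
    ⟨fun h hle => (h hle).ge, fun h hle => le_antisymm hle (h hle)⟩

theorem finite_setOf_minimal (N : Set (Fin (n + 1) →₀ ℕ)) : {β | Minimal (· ∈ N) β}.Finite :=
  (setOfPred_minimal_antichain _).finite_of_partiallyWellOrderedOn
    (Set.isPWO_of_wellQuasiOrderedLE _)

theorem subset_of_minimal_subset (h₂ : IsUpperSet N₂) (h : ∀ β, Minimal (· ∈ N₁) β → β ∈ N₂) :
    N₁ ⊆ N₂ := fun β hβ =>
  have ⟨m, hmβ, hm⟩ := exists_minimal_le_of_wellFoundedLT (· ∈ N₁) β hβ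
  h₂ hmβ (h m hm)

theorem minimal_mem_iff_of_forall_le {y : Fin (n + 1) →₀ ℕ} (h : ∀ γ ≤ y, (γ ∈ N₁ ↔ γ ∈ N₂)) :
    Minimal (· ∈ N₁) y ↔ Minimal (· ∈ N₂) y := by
  refine and_congr (h y le_rfl) (forall_congr' fun γ => ?_)
  exact ⟨fun H hγ hle => H ((h γ hle).mpr hγ) hle, fun H hγ hle => H ((h γ hle).mp hγ) hle⟩

theorem exists_pairwise_fKey_lt_mem_iff (S : Finset (Fin (n + 1) →₀ ℕ)) :
    ∃ l : List (Fin (n + 1) →₀ ℕ), l.Pairwise (fun a b => fKey a < fKey b) ∧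
      ∀ x, x ∈ l ↔ x ∈ S := by
  let le (a b : Fin (n + 1) →₀ ℕ) : Bool := decide (fKey a ≤ fKey b)
  have htrans : ∀ a b c, le a b → le b c → le a c := by simpa [le] using fun a b c => le_trans
  have htotal : ∀ a b, (le a b || le b a) := by
    simpa [le] using fun a b => le_total (fKey a) (fKey b)
  have hnodup : (S.toList.mergeSort le).Nodup :=
    (List.mergeSort_perm _ _).nodup_iff.mpr S.nodup_toList
  refine ⟨S.toList.mergeSort le, ?_, by simp⟩
  refine ((List.pairwise_mergeSort htrans htotal _).and hnodup).imp fun ⟨hle, hne⟩ => ?_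
  exact lt_of_le_of_ne (of_decide_eq_true hle) fun h => hne (fKey_injective h)

theorem exists_vertexList (hN : IsUpperSet N) :
    ∃ l, VertexList N l ∧ ∀ x, x ∈ l ↔ Minimal (· ∈ N) x := by
  obtain ⟨l, hl, hmem⟩ := exists_pairwise_fKey_lt_mem_iff (finite_setOf_minimal N).toFinset
  simp only [Set.Finite.mem_toFinset, Set.mem_ofPred_eq] at hmem
  refine ⟨l, ⟨hl, ?_, fun s hs => ?_⟩, hmem⟩
  · ext x
    simp only [Set.mem_iUnion, List.mem_toFinset, hmem, Set.mem_ofPred_eq, exists_prop,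
      ← le_iff_exists_add]
    exact ⟨fun hx => (exists_minimal_le_of_wellFoundedLT _ x hx).imp fun _ h => h.symm,
      fun ⟨s, hs, hsx⟩ => hN hsx hs.prop⟩
  · simp only [List.mem_toFinset, hmem] at hs
    simp only [Set.mem_iUnion, Finset.mem_erase, List.mem_toFinset, hmem, Set.mem_ofPred_eq,
      ← le_iff_exists_add, not_exists]
    exact fun t ⟨hts, ht⟩ hle => hts (le_antisymm hle (hs.2 ht.prop hle))

end Vertices

section DiagramOrder

variable {a b δ : Fin (n + 1) →₀ ℕ} {l₁ l₂ : List (Fin (n + 1) →₀ ℕ)}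
  {N₁ N₂ : Set (Fin (n + 1) →₀ ℕ)}

theorem listDiagLT_cons_nil (a : Fin (n + 1) →₀ ℕ) (l : List (Fin (n + 1) →₀ ℕ)) :
    listDiagLT (a :: l) [] :=
  ⟨0, by simp, by simp [padKey]⟩

theorem listDiagLT_cons_of_fKey_lt (h : fKey a < fKey b) (l₁ l₂ : List (Fin (n + 1) →₀ ℕ)) :
    listDiagLT (a :: l₁) (b :: l₂) :=
  ⟨0, by simp, by simpa [padKey] using h⟩

theorem _root_.listDiagLT.cons (h : listDiagLT l₁ l₂) (a : Fin (n + 1) →₀ ℕ) :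
    listDiagLT (a :: l₁) (a :: l₂) := by
  obtain ⟨j, hpre, hlt⟩ := h
  refine ⟨j + 1, fun j' hj' => ?_, by simpa [padKey] using hlt⟩
  cases j' with
  | zero => rfl
  | succ j' => simpa [padKey] using hpre j' (by omega)

theorem fKey_head_le {y : Fin (n + 1) →₀ ℕ} {l : List (Fin (n + 1) →₀ ℕ)}
    (hl : (a :: l).Pairwise (fun a b => fKey a < fKey b)) (hy : y ∈ a :: l) :
    fKey a ≤ fKey y := by
  rcases List.mem_cons.mp hy with rfl | hy
  exacts [le_rfl, (List.rel_of_pairwise_cons hl hy).le]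

theorem listDiagLT_of_agree_below :
    ∀ {l₁ l₂ : List (Fin (n + 1) →₀ ℕ)}, l₁.Pairwise (fun a b => fKey a < fKey b) →
      l₂.Pairwise (fun a b => fKey a < fKey b) → δ ∈ l₁ → δ ∉ l₂ →
      (∀ y, fKey y < fKey δ → (y ∈ l₁ ↔ y ∈ l₂)) → listDiagLT l₁ l₂
  | [], _, _, _, hδ, _, _ => absurd hδ List.not_mem_nil
  | a :: t₁, [], _, _, _, _, _ => listDiagLT_cons_nil a t₁
  | a :: t₁, b :: t₂, hl₁, hl₂, hδ₁, hδ₂, hagree => by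
    by_cases haδ : fKey a < fKey δ
    · have hba : fKey b ≤ fKey a := fKey_head_le hl₂ ((hagree a haδ).mp List.mem_cons_self)
      have hab : fKey a ≤ fKey b :=
        fKey_head_le hl₁ ((hagree b (hba.trans_lt haδ)).mpr List.mem_cons_self)
      obtain rfl : a = b := fKey_injective (le_antisymm hab hba)
      have hnot : ∀ {t}, (a :: t).Pairwise (fun a b => fKey a < fKey b) → a ∉ t :=
        fun hl ha => (List.rel_of_pairwise_cons hl ha).false
      refine listDiagLT_of_agree_below hl₁.of_cons hl₂.of_cons
        ((List.mem_cons.mp hδ₁).resolve_left fun h => haδ.ne (h ▸ rfl))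
        (fun h => hδ₂ (List.mem_cons_of_mem a h)) (fun y hy => ?_) |>.cons a
      rcases eq_or_ne y a with rfl | hya
      · exact iff_of_false (hnot hl₁) (hnot hl₂)
      · simpa [hya] using hagree y hy
    · obtain rfl : a = δ := (List.mem_cons.mp hδ₁).elim Eq.symm
        fun h => absurd (List.rel_of_pairwise_cons hl₁ h) haδ
      refine listDiagLT_cons_of_fKey_lt ?_ t₁ t₂
      refine (lt_or_gt_of_ne fun h => ?_).resolve_left fun h => ?_
      · exact hδ₂ (fKey_injective h ▸ List.mem_cons_self)
      · exact (fKey_head_le hl₁ ((hagree b h).mpr List.mem_cons_self)).not_gt h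

theorem ncard_inter_keyIic_lt (hsub : N₁ ∩ ↑(keyIic δ) ⊆ N₂) (hδ₂ : δ ∈ N₂) (hδ₁ : δ ∉ N₁) :
    (N₁ ∩ ↑(keyIic δ)).ncard < (N₂ ∩ ↑(keyIic δ)).ncard := by
  refine Set.ncard_lt_ncard ?_ ((keyIic δ).finite_toSet.inter_of_right _)
  have hle : N₁ ∩ ↑(keyIic δ) ⊆ N₂ ∩ ↑(keyIic δ) := Set.subset_inter hsub Set.inter_subset_right
  exact (Set.ssubset_iff_of_subset hle).mpr ⟨δ, ⟨hδ₂, mem_keyIic.mpr le_rfl⟩, fun h => hδ₁ h.1⟩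

theorem diagLE_of_ncard_le (h₁ : IsUpperSet N₁) (h₂ : IsUpperSet N₂)
    (hcard : ∀ δ : Fin (n + 1) →₀ ℕ, (N₂ ∩ ↑(keyIic δ)).ncard ≤ (N₁ ∩ ↑(keyIic δ)).ncard) :
    DiagLE N₁ N₂ := by
  obtain ⟨l₁, hl₁, hmem₁⟩ := exists_vertexList h₁
  rcases eq_or_ne N₁ N₂ with rfl | hne
  · exact ⟨l₁, l₁, hl₁, hl₁, Or.inr rfl⟩
  obtain ⟨l₂, hl₂, hmem₂⟩ := exists_vertexList h₂
  refine ⟨l₁, l₂, hl₁, hl₂, Or.inl ?_⟩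
  -- `δ` is the first exponent at which the two diagrams differ
  obtain ⟨δ, hδ, hδmin⟩ := exists_fKey_min (Set.symmDiff_nonempty.mpr hne)
  have hagree : ∀ y, fKey y < fKey δ → (y ∈ N₁ ↔ y ∈ N₂) := fun y hy => by
    by_contra h
    exact (hδmin y (by rw [Set.mem_symmDiff]; tauto)).not_gt hy
  have hbelow : ∀ {N : Set (Fin (n + 1) →₀ ℕ)}, δ ∉ N →
      N ∩ ↑(keyIic δ) ⊆ {y | fKey y < fKey δ} :=
    fun hN y hy => (mem_keyIic.mp hy.2).lt_of_ne fun h => hN (fKey_injective h ▸ hy.1)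
  obtain ⟨hδ₁, hδ₂⟩ : δ ∈ N₁ ∧ δ ∉ N₂ := by
    refine (Set.mem_symmDiff.mp hδ).resolve_right fun ⟨hδ₂, hδ₁⟩ => (hcard δ).not_gt ?_
    exact ncard_inter_keyIic_lt (fun y hy => (hagree y (hbelow hδ₁ hy)).mp hy.1) hδ₂ hδ₁
  have hδvertex : Minimal (· ∈ N₁) δ := ⟨hδ₁, fun γ hγ hle => by
    by_contra hne
    exact hδ₂ (h₂ hle ((hagree γ (fKey_lt_fKey (lt_of_le_not_ge hle hne))).mp hγ))⟩
  refine listDiagLT_of_agree_below hl₁.1 hl₂.1 ((hmem₁ δ).mpr hδvertex)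
    (fun h => hδ₂ ((hmem₂ δ).mp h).prop) fun y hy => ?_
  rw [hmem₁, hmem₂]
  exact minimal_mem_iff_of_forall_le fun γ hγ => hagree γ ((fKey_le_fKey hγ).trans_lt hy)

theorem eq_of_subset_of_ncard_le (hsub : N₁ ⊆ N₂)
    (hcard : ∀ δ : Fin (n + 1) →₀ ℕ, (N₂ ∩ ↑(keyIic δ)).ncard ≤ (N₁ ∩ ↑(keyIic δ)).ncard) :
    N₂ = N₁ :=
  (Set.Subset.antisymm hsub fun δ hδ₂ => by_contra fun hδ₁ =>
    (hcard δ).not_gt (ncard_inter_keyIic_lt (fun _ hy => hsub hy.1) hδ₂ hδ₁)).symm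

end DiagramOrder

section LeadIndex

variable {T α : Type*} [LinearOrder α] (key : T → α)

def IsLeadIndex {B : Type*} [Zero B] (w : T → B) (t : T) : Prop :=
  w t ≠ 0 ∧ ∀ t', w t' ≠ 0 → key t ≤ key t'

def leadIndices {B : Type*} [Semiring B] (W : Submodule B (T → B)) : Set T :=
  {t | ∃ w ∈ W, IsLeadIndex key w t}

variable {key}

theorem isLeadIndex_congr {B B' : Type*} [Zero B] [Zero B'] {w : T → B} {w' : T → B'}
    (h : ∀ t, w t = 0 ↔ w' t = 0) (t : T) : IsLeadIndex key w t ↔ IsLeadIndex key w' t := by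
  simp only [IsLeadIndex, ne_eq, h]

theorem exists_isLeadIndex [Finite T] {B : Type*} [Zero B] {w : T → B} (hw : w ≠ 0) :
    ∃ t, IsLeadIndex key w t := by
  obtain ⟨t, ht, hmin⟩ := Set.exists_min_image {t | w t ≠ 0} key (Set.toFinite _)
    (Function.ne_iff.mp hw)
  exact ⟨t, ht, hmin⟩

variable {K : Type*} [Field K] {W : Submodule K (T → K)}

theorem finrank_inf_ker_proj_add_one [Fintype T] {w : T → K} (hw : w ∈ W) {t : T}
    (ht : w t ≠ 0) :
    Module.finrank K ↥(W ⊓ LinearMap.ker (LinearMap.proj t)) + 1 = Module.finrank K W := by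
  let φ : W →ₗ[K] K := (LinearMap.proj t).comp W.subtype
  have hφ : Function.Surjective φ := fun x =>
    ⟨(x * (w t)⁻¹) • ⟨w, hw⟩, show x * (w t)⁻¹ * w t = x by field_simp⟩
  have hker : Module.finrank K (LinearMap.ker φ) =
      Module.finrank K ↥(W ⊓ LinearMap.ker (LinearMap.proj t)) := by
    rw [← Submodule.map_comap_subtype, LinearMap.ker_comp, Submodule.finrank_map_subtype_eq]
  rw [← hker, ← LinearMap.finrank_range_add_finrank_ker φ, LinearMap.range_eq_top.mpr hφ,
    finrank_top, Module.finrank_self, add_comm]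

theorem leadIndices_eq_insert (hkey : Function.Injective key) {t₀ : T}
    (ht₀ : t₀ ∈ leadIndices key W) (hmin : ∀ t ∈ leadIndices key W, key t₀ ≤ key t) :
    leadIndices key W =
      insert t₀ (leadIndices key (W ⊓ LinearMap.ker (LinearMap.proj t₀))) := by
  ext t
  constructor
  · rintro ⟨w, hw, hlead⟩
    rcases eq_or_ne t t₀ with rfl | hne
    · exact Set.mem_insert _ _
    refine Or.inr ⟨w, ⟨hw, by_contra fun hwt₀ => hne (hkey ?_)⟩, hlead⟩
    exact le_antisymm (hlead.2 t₀ hwt₀) (hmin t ⟨w, hw, hlead⟩)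
  · rintro (rfl | ⟨w, hw, hlead⟩)
    exacts [ht₀, ⟨w, hw.1, hlead⟩]

theorem not_mem_leadIndices_inf_ker_proj (W : Submodule K (T → K)) (t : T) :
    t ∉ leadIndices key (W ⊓ LinearMap.ker (LinearMap.proj t)) :=
  fun ⟨_, hw, hlead⟩ => hlead.1 hw.2

theorem ncard_leadIndices [Fintype T] (hkey : Function.Injective key) (W : Submodule K (T → K)) :
    (leadIndices key W).ncard = Module.finrank K W := by
  induction h : Module.finrank K W generalizing W with
  | zero =>
    rw [Submodule.finrank_eq_zero.mp h, Set.ncard_eq_zero]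
    exact Set.eq_empty_of_forall_notMem fun t ⟨w, hw, hlead⟩ =>
      hlead.1 (by rw [(Submodule.mem_bot K).mp hw, Pi.zero_apply])
  | succ k ih =>
    obtain ⟨w, hw, hw0⟩ : ∃ w ∈ W, w ≠ 0 := Submodule.exists_mem_ne_zero_of_ne_bot fun hW => by
      rw [hW, finrank_bot] at h
      exact k.succ_ne_zero h.symm
    obtain ⟨t, ht⟩ := exists_isLeadIndex (key := key) hw0
    obtain ⟨t₀, ⟨w₀, hw₀, hlead₀⟩, hmin⟩ :=
      Set.exists_min_image (leadIndices key W) key (Set.toFinite _) ⟨t, w, hw, ht⟩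
    rw [leadIndices_eq_insert hkey ⟨w₀, hw₀, hlead₀⟩ hmin,
      Set.ncard_insert_of_notMem (not_mem_leadIndices_inf_ker_proj W t₀) (Set.toFinite _),
      ih _ (by have := finrank_inf_ker_proj_add_one hw₀ hlead₀.1; omega)]

theorem leadIndices_span_algebraMap {A L : Type*} [CommRing A] [Field L] [Algebra A L]
    [IsFractionRing A L] {ι : Type*} [Fintype ι] (r : ι → T → A) :
    leadIndices key (Submodule.span L (Set.range fun i t => algebraMap A L (r i t))) =
      leadIndices key (Submodule.span A (Set.range r)) := by
  have hinj := IsFractionRing.injective A L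
  ext t
  constructor
  · rintro ⟨w, hw, hlead⟩
    obtain ⟨c, rfl⟩ := (Submodule.mem_span_range_iff_exists_fun L).mp hw
    -- clear the denominators of the coefficients `c i`
    obtain ⟨b, hb⟩ := IsLocalization.exist_integer_multiples (nonZeroDivisors A) Finset.univ c
    choose a ha using fun i => hb i (Finset.mem_univ i)
    refine ⟨∑ i, a i • r i, (Submodule.mem_span_range_iff_exists_fun A).mpr ⟨a, rfl⟩,
      (isLeadIndex_congr (fun t => ?_) t).mpr hlead⟩
    have hsum : algebraMap A L ((∑ i, a i • r i) t) =
        algebraMap A L b * (∑ i, c i • fun t => algebraMap A L (r i t)) t := by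
      simp only [Finset.sum_apply, Pi.smul_apply, smul_eq_mul, map_sum, map_mul, ha,
        Finset.mul_sum]
      exact Finset.sum_congr rfl fun i _ => by rw [Algebra.smul_def, mul_assoc]
    rw [← map_eq_zero_iff _ hinj, hsum, mul_eq_zero,
      or_iff_right (IsLocalization.map_units L b).ne_zero]
  · rintro ⟨w, hw, hlead⟩
    obtain ⟨c, rfl⟩ := (Submodule.mem_span_range_iff_exists_fun A).mp hw
    refine ⟨fun t => algebraMap A L ((∑ i, c i • r i) t),
      (Submodule.mem_span_range_iff_exists_fun L).mpr ⟨fun i => algebraMap A L (c i), ?_⟩,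
      (isLeadIndex_congr (fun t => ?_) t).mp hlead⟩
    · ext t
      simp [Finset.sum_apply, Algebra.smul_def]
    · exact (map_eq_zero_iff _ hinj).symm

end LeadIndex

section Specialization

theorem exists_linearIndependent_fin {K V ι : Type*} [Field K] [AddCommGroup V] [Module K V]
    [Finite ι] (v : ι → V) {k : ℕ}
    (hk : Module.finrank K (Submodule.span K (Set.range v)) = k) :
    ∃ a : Fin k → ι, LinearIndependent K (v ∘ a) := by
  obtain ⟨κ, a, ha, hspan, hli⟩ := exists_linearIndependent' K v
  have : Finite κ := Finite.of_injective a ha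
  have : Fintype κ := Fintype.ofFinite κ
  have hcard : Fintype.card κ = k := by rw [← hk, ← hspan, finrank_span_eq_card hli]
  let e := (Fintype.equivFinOfCardEq hcard).symm
  exact ⟨a ∘ e, hli.comp e e.injective⟩

theorem _root_.Matrix.exists_submatrix_det_ne_zero {K m n : Type*} [Field K] [Fintype m]
    [Fintype n] (M : Matrix m n K) :
    ∃ (r : Fin M.rank → m) (c : Fin M.rank → n), (M.submatrix r c).det ≠ 0 := by
  obtain ⟨r, hr⟩ := exists_linearIndependent_fin M.row M.rank_eq_finrank_span_row.symm
  have hrank : (M.submatrix r id).rank = M.rank := by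
    simpa using LinearIndependent.rank_matrix (M := M.submatrix r id) hr
  obtain ⟨c, hc⟩ := exists_linearIndependent_fin (M.submatrix r id).col
    ((M.submatrix r id).rank_eq_finrank_span_cols.symm.trans hrank)
  exact ⟨r, c, (Matrix.isUnit_iff_isUnit_det _).mp
    (Matrix.linearIndependent_cols_iff_isUnit.mp hc) |>.ne_zero⟩

theorem _root_.Matrix.rank_map_le_rank_map {A K L m n : Type*} [CommRing A] [Field K] [Field L]
    [Fintype m] [Fintype n] (v : A →+* K) (w : A →+* L) (hker : ∀ a, w a = 0 → v a = 0)
    (M : Matrix m n A) : (M.map v).rank ≤ (M.map w).rank := by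
  classical
  obtain ⟨r, c, hdet⟩ := (M.map v).exists_submatrix_det_ne_zero
  have hdetw : ((M.map w).submatrix r c).det ≠ 0 := by
    rw [Matrix.submatrix_map, ← RingHom.mapMatrix_apply, ← RingHom.map_det] at hdet ⊢
    exact fun h => hdet (by rw [hker _ h])
  calc (M.map v).rank = ((M.map w).submatrix r c).rank := by
        rw [Matrix.rank_of_det_ne_zero hdetw, Fintype.card_fin]
    _ ≤ (M.map w).rank := Matrix.rank_submatrix_le _ _ _

theorem finrank_span_map_le {A K L ι T : Type*} [CommRing A] [Field K] [Field L] [Fintype ι]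
    [Fintype T] (v : A →+* K) (w : A →+* L) (hker : ∀ a, w a = 0 → v a = 0) (r : ι → T → A) :
    Module.finrank K (Submodule.span K (Set.range fun i t => v (r i t))) ≤
      Module.finrank L (Submodule.span L (Set.range fun i t => w (r i t))) := by
  have := (Matrix.of r).rank_map_le_rank_map v w hker
  rwa [Matrix.rank_eq_finrank_span_row, Matrix.rank_eq_finrank_span_row] at this

end Specialization

section Truncation

open MvPowerSeries

variable {B : Type} [CommRing B] {s : ℕ} {δ : Fin (n + 1) →₀ ℕ}

noncomputable def trunc (δ : Fin (n + 1) →₀ ℕ) :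
    MvPowerSeries (Fin (n + 1)) B →ₗ[B] (keyIic δ → B) :=
  LinearMap.pi fun t => coeff t.1

/-- Only the `X^γ F_j` with `γ ∈ keyIic δ` contribute to truncations at `δ` of elements of
`(F_1, …, F_s)`, see `mem_span_truncRows_iff`. -/
noncomputable def truncRows (δ : Fin (n + 1) →₀ ℕ) (F : Fin s → MvPowerSeries (Fin (n + 1)) B) :
    keyIic δ × Fin s → keyIic δ → B :=
  fun p => trunc δ (monomial p.1.1 1 * F p.2)

theorem trunc_apply (g : MvPowerSeries (Fin (n + 1)) B) (t : keyIic δ) :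
    trunc δ g t = coeff t.1 g :=
  rfl

theorem coeff_mul_eq_of_coeff_eq {c c' f : MvPowerSeries (Fin (n + 1)) B}
    {t : Fin (n + 1) →₀ ℕ} (h : ∀ x ≤ t, coeff x c = coeff x c') :
    coeff t (c * f) = coeff t (c' * f) := by
  rw [coeff_mul, coeff_mul]
  refine Finset.sum_congr rfl fun p hp => ?_
  rw [h p.1 (Finset.HasAntidiagonal.mem_antidiagonal.mp hp ▸ le_self_add)]

theorem trunc_mul (c f : MvPowerSeries (Fin (n + 1)) B) :
    trunc δ (c * f) = ∑ γ ∈ keyIic δ, coeff γ c • trunc δ (monomial γ 1 * f) := by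
  have hc : ∑ γ ∈ keyIic δ, coeff γ c • (monomial γ 1 * f) =
      (∑ γ ∈ keyIic δ, monomial γ (coeff γ c)) * f := by
    rw [Finset.sum_mul]
    refine Finset.sum_congr rfl fun γ _ => ?_
    rw [← smul_mul_assoc, ← map_smul, smul_eq_mul, mul_one]
  simp_rw [← map_smul, ← map_sum, hc]
  funext t
  refine coeff_mul_eq_of_coeff_eq fun x hx => ?_
  have hxδ : x ∈ keyIic δ := mem_keyIic.mpr ((fKey_le_fKey hx).trans (mem_keyIic.mp t.2))
  simp [coeff_monomial, hxδ]

theorem mem_span_truncRows_iff {F : Fin s → MvPowerSeries (Fin (n + 1)) B} {w : keyIic δ → B} :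
    w ∈ Submodule.span B (Set.range (truncRows δ F)) ↔
      ∃ g ∈ Ideal.span (Set.range F), trunc δ g = w := by
  constructor
  · intro hw
    obtain ⟨u, rfl⟩ := (Submodule.mem_span_range_iff_exists_fun B).mp hw
    refine ⟨∑ p, u p • (monomial p.1.1 1 * F p.2), ?_, by simp [truncRows]⟩
    exact Submodule.sum_mem _ fun p _ => Submodule.smul_of_tower_mem _ _
      (Ideal.mul_mem_left _ _ (Ideal.subset_span ⟨p.2, rfl⟩))
  · rintro ⟨g, hg, rfl⟩
    obtain ⟨c, rfl⟩ := Ideal.mem_span_range_iff_exists_fun.mp hg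
    rw [map_sum]
    refine Submodule.sum_mem _ fun j _ => ?_
    rw [trunc_mul]
    exact Submodule.sum_mem _ fun γ hγ =>
      Submodule.smul_mem _ _ (Submodule.subset_span ⟨(⟨γ, hγ⟩, j), rfl⟩)

theorem isLeadIndex_trunc_iff {g : MvPowerSeries (Fin (n + 1)) B} {t : keyIic δ} :
    IsLeadIndex (fun t : keyIic δ => fKey t.1) (trunc δ g) t ↔ IsInitExp g t.1 := by
  refine ⟨fun ⟨ht, hmin⟩ => ⟨ht, fun γ hγ => ?_⟩,
    fun ⟨ht, hmin⟩ => ⟨ht, fun t' ht' => hmin _ ht'⟩⟩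
  by_cases hγδ : γ ∈ keyIic δ
  · exact hmin ⟨γ, hγδ⟩ hγ
  · exact (mem_keyIic.mp t.2).trans (le_of_not_ge (mt mem_keyIic.mpr hγδ))

theorem diagOf_inter_keyIic (δ : Fin (n + 1) →₀ ℕ) (F : Fin s → MvPowerSeries (Fin (n + 1)) B) :
    diagOf (Ideal.span (Set.range F)) ∩ ↑(keyIic δ) = Subtype.val '' leadIndices
      (fun t : keyIic δ => fKey t.1) (Submodule.span B (Set.range (truncRows δ F))) := by
  ext β
  constructor
  · rintro ⟨⟨g, hg, -, hinit⟩, hβ⟩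
    exact ⟨⟨β, hβ⟩, ⟨trunc δ g, mem_span_truncRows_iff.mpr ⟨g, hg, rfl⟩,
      isLeadIndex_trunc_iff.mpr hinit⟩, rfl⟩
  · rintro ⟨t, ⟨w, hw, hlead⟩, rfl⟩
    obtain ⟨g, hg, rfl⟩ := mem_span_truncRows_iff.mp hw
    have hinit := isLeadIndex_trunc_iff.mp hlead
    exact ⟨⟨g, hg, hinit.ne_zero, hinit⟩, t.2⟩

theorem truncRows_map {B' : Type} [CommRing B'] (φ : B →+* B') (δ : Fin (n + 1) →₀ ℕ)
    (F : Fin s → MvPowerSeries (Fin (n + 1)) B) :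
    truncRows δ (fun j => map φ (F j)) = fun p t => φ (truncRows δ F p t) := by
  funext p t
  simp [truncRows, trunc_apply, coeff_monomial_mul, apply_ite φ]

theorem ncard_diagOf_inter_keyIic {K : Type} [Field K] (δ : Fin (n + 1) →₀ ℕ)
    (F : Fin s → MvPowerSeries (Fin (n + 1)) K) :
    (diagOf (Ideal.span (Set.range F)) ∩ ↑(keyIic δ)).ncard =
      Module.finrank K (Submodule.span K (Set.range (truncRows δ F))) := by
  rw [diagOf_inter_keyIic, Set.ncard_image_of_injective _ Subtype.val_injective,
    ncard_leadIndices (injective_fKey_val δ)]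

theorem ncard_diagOf_inter_keyIic_eq_finrank_fractionRing {A L : Type} [CommRing A] [Field L]
    [Algebra A L] [IsFractionRing A L] (δ : Fin (n + 1) →₀ ℕ)
    (F : Fin s → MvPowerSeries (Fin (n + 1)) A) :
    (diagOf (Ideal.span (Set.range F)) ∩ ↑(keyIic δ)).ncard = Module.finrank L
      (Submodule.span L (Set.range fun p t => algebraMap A L (truncRows δ F p t))) := by
  rw [diagOf_inter_keyIic, ← leadIndices_span_algebraMap (L := L),
    Set.ncard_image_of_injective _ Subtype.val_injective, ncard_leadIndices (injective_fKey_val δ)]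

end Truncation

section Genericity

open MvPowerSeries

theorem ncard_diagOf_map_le {A K : Type} [CommRing A] [IsDomain A] [Field K] (v : A →+* K)
    {s : ℕ} (F : Fin s → MvPowerSeries (Fin (n + 1)) A) (δ : Fin (n + 1) →₀ ℕ) :
    (diagOf (Ideal.span (Set.range fun j => map v (F j))) ∩ ↑(keyIic δ)).ncard ≤
      (diagOf (Ideal.span (Set.range F)) ∩ ↑(keyIic δ)).ncard := by
  rw [ncard_diagOf_inter_keyIic, truncRows_map,
    ncard_diagOf_inter_keyIic_eq_finrank_fractionRing (L := FractionRing A)]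
  refine finrank_span_map_le v _ (fun a ha => ?_) _
  rw [(map_eq_zero_iff _ (IsFractionRing.injective A _)).mp ha, map_zero]

theorem exists_ne_zero_forall_mem_dvd {B : Type} [CommRing B] [IsDomain B]
    (J : Ideal (MvPowerSeries (Fin (n + 1)) B)) (S : Finset (Fin (n + 1) →₀ ℕ))
    (hS : ∀ β ∈ S, β ∈ diagOf J) :
    ∃ f₀ : B, f₀ ≠ 0 ∧ ∀ β ∈ S, ∃ G ∈ J, IsInitExp G β ∧ coeff β G ∣ f₀ := by
  induction S using Finset.induction_on with
  | empty => exact ⟨1, one_ne_zero, by simp⟩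
  | insert β S _ ih =>
    obtain ⟨f₀, hf₀, hS'⟩ := ih fun γ hγ => hS γ (Finset.mem_insert_of_mem hγ)
    obtain ⟨G, hG, -, hinit⟩ := hS β (Finset.mem_insert_self β S)
    refine ⟨coeff β G * f₀, mul_ne_zero hinit.1 hf₀, fun γ hγ => ?_⟩
    rcases Finset.mem_insert.mp hγ with rfl | hγ
    · exact ⟨G, hG, hinit, dvd_mul_right _ _⟩
    · obtain ⟨G', hG', hinit', hdvd⟩ := hS' γ hγ
      exact ⟨G', hG', hinit', hdvd.mul_left _⟩

end Genericity

end BierstoneMilman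

open BierstoneMilman

theorem bierstone_milman_generic_diagram_general {K A : Type} [Field K]
    [CommRing A] [IsDomain A] [Algebra K A]
    {n s : ℕ} (F : Fin s → MvPowerSeries (Fin (n + 1)) A) :
    (∀ v : A →ₐ[K] K,
      DiagLE (diagOf (Ideal.span (Set.range F)))
        (diagOf (Ideal.span (Set.range fun j =>
          MvPowerSeries.map (v : A →+* K) (F j))))) ∧
    (∃ f₀ : A, f₀ ≠ 0 ∧
      (∀ v : A →ₐ[K] K, v f₀ ≠ 0 →
        diagOf (Ideal.span (Set.range fun j =>
            MvPowerSeries.map (v : A →+* K) (F j))) =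
          diagOf (Ideal.span (Set.range F))) ∧
      (∀ β, IsVertex (diagOf (Ideal.span (Set.range F))) β →
        ∃ G ∈ Ideal.span (Set.range F), IsInitExp G β ∧
          ∀ v : A →ₐ[K] K, v f₀ ≠ 0 →
            IsInitExp (MvPowerSeries.map (v : A →+* K) G) β)) := by
  set J := Ideal.span (Set.range F)
  have hcard (v : A →ₐ[K] K) := ncard_diagOf_map_le (v : A →+* K) F
  have hvertices := finite_setOf_minimal (diagOf J)
  obtain ⟨f₀, hf₀, hwitness⟩ := exists_ne_zero_forall_mem_dvd J hvertices.toFinset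
    fun β hβ => (hvertices.mem_toFinset.mp hβ).prop
  have hgeneric : ∀ β, IsVertex (diagOf J) β → ∃ G ∈ J, IsInitExp G β ∧
      ∀ v : A →ₐ[K] K, v f₀ ≠ 0 → v (MvPowerSeries.coeff β G) ≠ 0 := by
    intro β hβ
    obtain ⟨G, hG, hinit, hdvd⟩ :=
      hwitness β (hvertices.mem_toFinset.mpr (isVertex_iff_minimal.mp hβ))
    exact ⟨G, hG, hinit, fun v hv h => hv (zero_dvd_iff.mp (h ▸ map_dvd v hdvd))⟩
  refine ⟨fun v => diagLE_of_ncard_le (isUpperSet_diagOf _) (isUpperSet_diagOf _) (hcard v),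
    f₀, hf₀, fun v hv => eq_of_subset_of_ncard_le ?_ (hcard v), fun β hβ => ?_⟩
  · refine subset_of_minimal_subset (isUpperSet_diagOf _) fun β hβ => ?_
    obtain ⟨G, hG, hinit, hGv⟩ := hgeneric β (isVertex_iff_minimal.mpr hβ)
    exact mem_diagOf_map _ hG hinit (hGv v hv)
  · obtain ⟨G, hG, hinit, hGv⟩ := hgeneric β hβ
    exact ⟨G, hG, hinit, fun v hv => hinit.map _ (hGv v hv)⟩

theorem bierstone_milman_generic_diagram {K A : Type} [Field K] [IsAlgClosed K]
    [CommRing A] [IsDomain A] [Algebra K A] (hA : Algebra.FiniteType K A)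
    {n s : ℕ} (F : Fin s → MvPowerSeries (Fin (n + 1)) A) :
    (∀ v : A →ₐ[K] K,
      DiagLE (diagOf (Ideal.span (Set.range F)))
        (diagOf (Ideal.span (Set.range fun j =>
          MvPowerSeries.map (v : A →+* K) (F j))))) ∧
    (∃ f₀ : A, f₀ ≠ 0 ∧
      (∀ v : A →ₐ[K] K, v f₀ ≠ 0 →
        diagOf (Ideal.span (Set.range fun j =>
            MvPowerSeries.map (v : A →+* K) (F j))) =
          diagOf (Ideal.span (Set.range F))) ∧
      (∀ β, IsVertex (diagOf (Ideal.span (Set.range F))) β →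
        ∃ G ∈ Ideal.span (Set.range F), IsInitExp G β ∧
          ∀ v : A →ₐ[K] K, v f₀ ≠ 0 →
            IsInitExp (MvPowerSeries.map (v : A →+* K) G) β)) :=
  bierstone_milman_generic_diagram_general F
end

section
/- Let B_i(φ) = {ψ ∈ ℂ[[t]]^d : ord(ψ − φ) > i} be a ball of arcs in ℂ^d. If S ∈ ℂ[[z_1,…,z_d]] is a formal power series such that ord(S(ψ(t))) ≥ k for every ψ ∈ B_i(φ) with ψ(0)=0, then the order of S at 0 satisfies m(S) ≥ k/(i+1). -/
/-! For `c ∈ ℂ^d` the arc `φ + c t^(i+1)` lies in the ball `B_i(φ)`. Treat `c` as indeterminates: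
the coefficient of `t^((i+1)|β|)` in `S(φ + c t^(i+1))` is then a polynomial in `c`. Substituting
`c ↦ c t^(i+1)` multiplies the `c^β`-part of `S(φ + c)` by `t^((i+1)|β|)`, so the `c^β`-coefficient
of that polynomial is the constant term in `t` of the `c^β`-part of `S(φ + c)`, which is `S_β`
because `φ(0) = 0`. Hence if `S_β ≠ 0` some `c ∈ ℂ^d` gives an arc with
`ord S(ψ(t)) ≤ (i+1)|β|`, and so `k ≤ (i+1)|β|`. -/

open scoped Classical

noncomputable def arcSubst {σ : Type} [Fintype σ] [DecidableEq σ]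
    (ψ : σ → PowerSeries ℂ) (f : MvPowerSeries σ ℂ) : PowerSeries ℂ :=
  PowerSeries.mk fun N => ∑ α ∈ expBox σ N,
    MvPowerSeries.coeff α f * PowerSeries.coeff N (∏ i, ψ i ^ α i)

noncomputable def pOrd (g : PowerSeries ℂ) : ℕ∞ :=
  ⨅ (N : ℕ) (_ : PowerSeries.coeff N g ≠ 0), (N : ℕ∞)

noncomputable def aOrd {n : ℕ} (φ ψ : Fin n → PowerSeries ℂ) : ℕ∞ :=
  ⨅ j : Fin n, pOrd (φ j - ψ j)

/-- Order (multiplicity at `0`) of a multivariate formal power series. -/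
noncomputable def mOrd {σ : Type} [Fintype σ] (S : MvPowerSeries σ ℂ) : ℕ∞ :=
  ⨅ (α : σ →₀ ℕ) (_ : MvPowerSeries.coeff α S ≠ 0), ((deg α : ℕ) : ℕ∞)

open MvPolynomial

theorem MvPolynomial.coeff_aeval_C_mul_X {R σ : Type} [CommSemiring R] [Fintype σ] (r : R)
    (p : MvPolynomial σ R) (β : σ →₀ ℕ) :
    coeff β (aeval (fun j => C r * X j) p) = r ^ deg β * coeff β p := by
  induction p using MvPolynomial.induction_on' with
  | monomial u a =>
    have haeval : aeval (fun j => C r * X j) (monomial u a) = monomial u (r ^ deg u * a) := by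
      rw [aeval_monomial, Finsupp.prod_pow, monomial_eq, Finsupp.prod_pow]
      simp only [mul_pow, Finset.prod_mul_distrib, ← map_pow, ← map_prod,
        Finset.prod_pow_eq_pow_sum, deg, algebraMap_eq, map_mul]
      ring
    rw [haeval, coeff_monomial, coeff_monomial]
    split_ifs with h <;> simp [h]
  | add p q hp hq => simp only [map_add, coeff_add, hp, hq, mul_add]

theorem MvPolynomial.powerSeries_coeff_eval_C {R σ : Type} [CommRing R] (c : σ → R)
    (p : MvPolynomial σ (PowerSeries R)) (n : ℕ) :
    PowerSeries.coeff n (eval (fun j => PowerSeries.C (c j)) p)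
      = eval c (AddMonoidAlgebra.map (PowerSeries.coeff n).toAddMonoidHom p) := by
  induction p using MvPolynomial.induction_on' with
  | monomial u a =>
    have hmap : AddMonoidAlgebra.map (PowerSeries.coeff n).toAddMonoidHom (monomial u a)
        = monomial u (PowerSeries.coeff n a) := AddMonoidAlgebra.map_single _ _ _
    rw [hmap, eval_monomial, eval_monomial]
    simp only [← map_pow, Finsupp.prod, ← map_prod, PowerSeries.coeff_mul_C]
  | add p q hp hq => simp only [map_add, hp, hq, AddMonoidAlgebra.map_add]

theorem MvPolynomial.constantCoeff_coeff_prod_C_add_X_pow {R σ : Type} [CommRing R] [Fintype σ]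
    (φ : σ → PowerSeries R) (hφ : ∀ j, PowerSeries.constantCoeff (φ j) = 0)
    (α β : σ →₀ ℕ) :
    PowerSeries.constantCoeff (coeff β (∏ j, (C (φ j) + X j) ^ α j))
      = if α = β then 1 else 0 := by
  rw [← coeff_map, map_prod]
  simp only [map_pow, map_add, map_C, map_X, hφ, map_zero, zero_add]
  rw [← Finsupp.prod_pow, ← one_mul (Finsupp.prod _ _), ← C_1, ← monomial_eq, coeff_monomial]

theorem le_pOrd_X_pow_mul (n : ℕ) (f : PowerSeries ℂ) :
    (n : ℕ∞) ≤ pOrd (PowerSeries.X ^ n * f) := by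
  refine le_iInf₂ fun m hm => ?_
  rw [PowerSeries.coeff_X_pow_mul'] at hm
  split_ifs at hm with h
  · exact_mod_cast h
  · exact absurd rfl hm

theorem pOrd_le_of_coeff_ne_zero {f : PowerSeries ℂ} {n : ℕ} (h : PowerSeries.coeff n f ≠ 0) :
    pOrd f ≤ n :=
  iInf₂_le n h

theorem mem_expBox_of_deg_le {σ : Type} [Fintype σ] [DecidableEq σ] {N : ℕ} {β : σ →₀ ℕ}
    (h : deg β ≤ N) : β ∈ expBox σ N := by
  rw [expBox, Finset.mem_Iic, Finsupp.le_def]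
  exact fun j => (Finset.single_le_sum (fun t _ => Nat.zero_le (β t)) (Finset.mem_univ j)).trans h

section GenericArc

variable {R σ : Type} [CommRing R] (φ : σ → PowerSeries R) (i : ℕ)

noncomputable def genericArc (j : σ) : MvPolynomial σ (PowerSeries R) :=
  C (φ j) + C (PowerSeries.X ^ (i + 1)) * X j

theorem eval_genericArc (c : σ → R) (j : σ) :
    eval (fun j => PowerSeries.C (c j)) (genericArc φ i j)
      = φ j + PowerSeries.X ^ (i + 1) * PowerSeries.C (c j) := by
  simp [genericArc]

variable [Fintype σ]

theorem prod_genericArc_pow (α : σ →₀ ℕ) :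
    ∏ j, genericArc φ i j ^ α j
      = aeval (fun j => C (PowerSeries.X ^ (i + 1)) * X j) (∏ j, (C (φ j) + X j) ^ α j) := by
  simp [genericArc, map_prod]

theorem coeff_coeff_prod_genericArc_pow (hφ : ∀ j, PowerSeries.constantCoeff (φ j) = 0)
    (α β : σ →₀ ℕ) :
    PowerSeries.coeff ((i + 1) * deg β) (coeff β (∏ j, genericArc φ i j ^ α j))
      = if α = β then 1 else 0 := by
  rw [prod_genericArc_pow, coeff_aeval_C_mul_X, ← pow_mul, PowerSeries.coeff_X_pow_mul',
    if_pos le_rfl, Nat.sub_self, PowerSeries.coeff_zero_eq_constantCoeff,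
    constantCoeff_coeff_prod_C_add_X_pow φ hφ]

end GenericArc

section ArcSubst

variable {σ : Type} [Fintype σ] [DecidableEq σ] (φ : σ → PowerSeries ℂ) (i : ℕ)
  (S : MvPowerSeries σ ℂ)

noncomputable def arcCoeffPoly (N : ℕ) : MvPolynomial σ ℂ :=
  ∑ α ∈ expBox σ N, C (MvPowerSeries.coeff α S) *
    AddMonoidAlgebra.map (PowerSeries.coeff N).toAddMonoidHom (∏ j, genericArc φ i j ^ α j)

theorem coeff_arcSubst_add_X_pow_mul (c : σ → ℂ) (N : ℕ) :
    PowerSeries.coeff N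
        (arcSubst (fun j => φ j + PowerSeries.X ^ (i + 1) * PowerSeries.C (c j)) S)
      = eval c (arcCoeffPoly φ i S N) := by
  simp only [arcSubst, PowerSeries.coeff_mk, arcCoeffPoly, map_sum, map_mul, eval_C,
    ← eval_genericArc, ← map_pow, ← map_prod, powerSeries_coeff_eval_C]

theorem coeff_arcCoeffPoly (hφ : ∀ j, PowerSeries.constantCoeff (φ j) = 0) (β : σ →₀ ℕ) :
    coeff β (arcCoeffPoly φ i S ((i + 1) * deg β)) = MvPowerSeries.coeff β S := by
  have hβ : β ∈ expBox σ ((i + 1) * deg β) :=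
    mem_expBox_of_deg_le (Nat.le_mul_of_pos_left _ i.succ_pos)
  rw [arcCoeffPoly, coeff_sum, Finset.sum_eq_single_of_mem β hβ]
  · simp [coeff_coeff_prod_genericArc_pow φ i hφ]
  · intro α _ hαβ
    simp [coeff_coeff_prod_genericArc_pow φ i hφ, hαβ]

theorem exists_coeff_arcSubst_add_X_pow_mul_ne_zero
    (hφ : ∀ j, PowerSeries.constantCoeff (φ j) = 0) {β : σ →₀ ℕ}
    (hβ : MvPowerSeries.coeff β S ≠ 0) :
    ∃ c : σ → ℂ, PowerSeries.coeff ((i + 1) * deg β)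
      (arcSubst (fun j => φ j + PowerSeries.X ^ (i + 1) * PowerSeries.C (c j)) S) ≠ 0 := by
  have hpoly : arcCoeffPoly φ i S ((i + 1) * deg β) ≠ 0 := fun h0 =>
    hβ (by rw [← coeff_arcCoeffPoly φ i S hφ, h0, coeff_zero])
  obtain ⟨c, hc⟩ : ∃ c, eval c (arcCoeffPoly φ i S ((i + 1) * deg β)) ≠ 0 := by
    by_contra! h
    exact hpoly (MvPolynomial.funext fun c => by rw [h c, map_zero])
  exact ⟨c, by rwa [coeff_arcSubst_add_X_pow_mul]⟩

end ArcSubst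

theorem lt_aOrd_add_X_pow_mul {d : ℕ} (φ : Fin d → PowerSeries ℂ) (i : ℕ) (c : Fin d → ℂ) :
    (i : ℕ∞) < aOrd (fun j => φ j + PowerSeries.X ^ (i + 1) * PowerSeries.C (c j)) φ := by
  refine (ENat.natCast_lt_natCast.mpr i.lt_succ_self).trans_le (le_iInf fun j => ?_)
  rw [add_sub_cancel_left]
  exact le_pOrd_X_pow_mul _ _

theorem le_mul_deg_of_coeff_ne_zero {d : ℕ}
    (φ : Fin d → PowerSeries ℂ) (hφ : ∀ j, PowerSeries.constantCoeff (φ j) = 0)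
    (i k : ℕ) (S : MvPowerSeries (Fin d) ℂ)
    (h : ∀ ψ : Fin d → PowerSeries ℂ, (∀ j, PowerSeries.constantCoeff (ψ j) = 0) →
      (i : ℕ∞) < aOrd ψ φ → (k : ℕ∞) ≤ pOrd (arcSubst ψ S))
    {β : Fin d →₀ ℕ} (hβ : MvPowerSeries.coeff β S ≠ 0) :
    (k : ℕ∞) ≤ ((i + 1) * deg β : ℕ) := by
  obtain ⟨c, hc⟩ := exists_coeff_arcSubst_add_X_pow_mul_ne_zero φ i S hφ hβ
  refine (h _ (fun j => ?_) (lt_aOrd_add_X_pow_mul φ i c)).trans (pOrd_le_of_coeff_ne_zero hc)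
  simp [hφ j]

theorem order_lower_bound_from_ball_of_arcs {d : ℕ}
    (φ : Fin d → PowerSeries ℂ) (hφ : ∀ j, PowerSeries.constantCoeff (φ j) = 0)
    (i k : ℕ) (S : MvPowerSeries (Fin d) ℂ)
    (h : ∀ ψ : Fin d → PowerSeries ℂ, (∀ j, PowerSeries.constantCoeff (ψ j) = 0) →
      (i : ℕ∞) < aOrd ψ φ → (k : ℕ∞) ≤ pOrd (arcSubst ψ S)) :
    (k : ℕ∞) ≤ ((i : ℕ∞) + 1) * mOrd S := by
  have hi : (i : ℕ∞) + 1 ≠ 0 := by simp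
  rw [mOrd, ENat.mul_iInf_of_ne hi]
  refine le_iInf fun β => ?_
  rw [ENat.mul_iInf_of_ne hi]
  exact le_iInf fun hβ => by exact_mod_cast le_mul_deg_of_coeff_ne_zero φ hφ i k S h hβ
end

section
/- Let P(U) = U^k + a_1 U^{k-1} + ⋯ + a_k be a monic polynomial with coefficients a_l ∈ ℂ[[t]], with discriminant Δ ∈ ℂ[[t]] nonzero of order ≤ s. If u(t), v(t) ∈ ℂ[[t]] are two roots of P with ord(u − v) > s, then u = v. -/
open scoped Classical

/-!
If `u ≠ v`, then `(u - v)²` is one of the factors of `Δ` computed in an algebraic closure of the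
fraction field, and the cofactor is integral over `ℂ[[t]]`. Since `ℂ[[t]]` is integrally closed,
`(u - v)² ∣ Δ` already in `ℂ[[t]]`, so `ord Δ ≥ ord (u - v) > s`, a contradiction.
-/

open Polynomial

lemma pOrd_eq_order (g : PowerSeries ℂ) : pOrd g = g.order := by
  apply le_antisymm
  · rcases eq_or_ne g 0 with rfl | hg
    · simp
    · rw [← PowerSeries.coe_toNat_order hg]
      exact iInf₂_le (f := fun (N : ℕ) _ => (N : ℕ∞)) _ (PowerSeries.coeff_order hg)
  · exact le_iInf₂ fun N hN => PowerSeries.order_le N hN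

lemma PowerSeries.order_le_order_of_dvd {R : Type*} [Semiring R] {φ ψ : PowerSeries R}
    (h : φ ∣ ψ) : φ.order ≤ ψ.order := by
  obtain ⟨χ, rfl⟩ := h
  exact le_self_add.trans (PowerSeries.le_order_mul φ χ)

lemma Polynomial.Monic.exists_eq_prod_X_sub_C_of_splits {L : Type*} [Field L] {p : L[X]}
    (hp : p.Monic) (hs : p.Splits) {k : ℕ} (hdeg : p.natDegree = k) :
    ∃ r : Fin k → L, p = ∏ j, (X - C (r j)) := by
  have hlen : p.roots.toList.length = k := by
    rw [Multiset.length_toList, splits_iff_card_roots.mp hs, hdeg]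
  subst hlen
  refine ⟨fun j => p.roots.toList[(j : ℕ)], ?_⟩
  rw [Fin.prod_univ_fun_getElem p.roots.toList (fun x => X - C x), ← Multiset.prod_coe,
    ← Multiset.map_coe, Multiset.coe_toList]
  exact hs.eq_prod_roots_of_monic hp

lemma exists_eq_of_eval_prod_X_sub_C_eq_zero {L ι : Type*} [Field L] [Fintype ι]
    {r : ι → L} {x : L} (hx : (∏ j, (X - C (r j))).eval x = 0) : ∃ j, r j = x := by
  obtain ⟨j, -, hj⟩ := Finset.prod_eq_zero_iff.mp (by rwa [eval_prod] at hx)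
  exact ⟨j, (sub_eq_zero.mp (by simpa using hj)).symm⟩

lemma sq_sub_dvd_prod_sq_sub {A : Type*} [CommRing A] {k : ℕ} (r : Fin k → A) {a b : Fin k}
    (hab : a ≠ b) :
    (r a - r b) ^ 2 ∣ ∏ j, ∏ j' ∈ Finset.univ.filter (fun j' => j' < j), (r j' - r j) ^ 2 := by
  wlog hlt : a < b generalizing a b
  · rw [← neg_sub, neg_sq]
    exact this hab.symm (lt_of_le_of_ne (not_lt.mp hlt) hab.symm)
  refine dvd_trans ?_ (Finset.dvd_prod_of_mem _ (Finset.mem_univ b))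
  exact Finset.dvd_prod_of_mem _ (Finset.mem_filter.mpr ⟨Finset.mem_univ a, hlt⟩)

lemma exists_isIntegral_prod_sq_sub_eq_mul {R L : Type*} [CommRing R] [CommRing L] [Algebra R L]
    {k : ℕ} (r : Fin k → L) (hr : ∀ j, IsIntegral R (r j)) {a b : Fin k} (hab : a ≠ b) :
    ∃ Q, IsIntegral R Q ∧ ∏ j, ∏ j' ∈ Finset.univ.filter (fun j' => j' < j), (r j' - r j) ^ 2 =
      (r a - r b) ^ 2 * Q := by
  obtain ⟨Q, hQ⟩ := sq_sub_dvd_prod_sq_sub (fun j => (⟨r j, hr j⟩ : integralClosure R L)) hab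
  exact ⟨Q, Q.2, by simpa using congrArg Subtype.val hQ⟩

lemma IsIntegrallyClosed.dvd_of_algebraMap_eq_mul_isIntegral {R K L : Type*} [CommRing R]
    [IsDomain R] [IsIntegrallyClosed R] [Field K] [Algebra R K] [IsFractionRing R K] [Field L]
    [Algebra R L] [Algebra K L] [IsScalarTower R K L] {x y : R} (hx : x ≠ 0) {Q : L}
    (hQ : IsIntegral R Q) (h : algebraMap R L y = algebraMap R L x * Q) : x ∣ y := by
  have hxK : algebraMap R K x ≠ 0 :=
    IsFractionRing.to_map_ne_zero_of_mem_nonZeroDivisors (mem_nonZeroDivisors_of_ne_zero hx)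
  have hxL : algebraMap R L x ≠ 0 := by
    rw [IsScalarTower.algebraMap_apply R K L]
    exact (_root_.map_ne_zero _).mpr hxK
  have hQK : algebraMap K L (algebraMap R K y / algebraMap R K x) = Q := by
    rw [map_div₀, ← IsScalarTower.algebraMap_apply, ← IsScalarTower.algebraMap_apply, h,
      mul_div_cancel_left₀ _ hxL]
  obtain ⟨w, hw⟩ := IsIntegrallyClosed.isIntegral_iff.mp
    ((isIntegral_algebraMap_iff (algebraMap K L).injective).mp (hQK ▸ hQ))
  refine ⟨w, IsFractionRing.injective R K ?_⟩
  rw [map_mul, hw, mul_div_cancel₀ _ hxK]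

lemma sq_sub_dvd_of_eval_eq_zero {R : Type} [CommRing R] [IsDomain R] [IsIntegrallyClosed R]
    {k : ℕ} {P : R[X]} (hP : P.Monic) (hdeg : P.natDegree = k) {Δ : R}
    (hΔ : ∀ (L : Type) [Field L], ∀ (ι : R →+* L) (r : Fin k → L), Function.Injective ι →
      P.map ι = ∏ j : Fin k, (X - C (r j)) →
      ι Δ = ∏ j : Fin k, ∏ j' ∈ Finset.univ.filter (fun j' => j' < j), (r j' - r j) ^ 2)
    {u v : R} (hu : P.eval u = 0) (hv : P.eval v = 0) (huv : u ≠ v) : (u - v) ^ 2 ∣ Δ := by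
  let K := FractionRing R
  let L := AlgebraicClosure K
  let ι := algebraMap R L
  have hι : Function.Injective ι := by
    change Function.Injective (algebraMap R L)
    rw [IsScalarTower.algebraMap_eq R K L]
    exact (algebraMap K L).injective.comp (IsFractionRing.injective R K)
  obtain ⟨r, hr⟩ := (hP.map ι).exists_eq_prod_X_sub_C_of_splits (IsAlgClosed.splits _)
    (by rw [hP.natDegree_map, hdeg])
  have hroot {x : R} (hx : P.eval x = 0) : ∃ j, r j = ι x :=
    exists_eq_of_eval_prod_X_sub_C_eq_zero (by rw [← hr, eval_map, eval₂_hom, hx, map_zero])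
  have hint (j : Fin k) : IsIntegral R (r j) :=
    ⟨P, hP, by
      rw [← eval_map, hr, eval_prod]
      exact Finset.prod_eq_zero (Finset.mem_univ j) (by simp)⟩
  obtain ⟨a, ha⟩ := hroot hu
  obtain ⟨b, hb⟩ := hroot hv
  obtain ⟨Q, hQ, hΔQ⟩ := exists_isIntegral_prod_sq_sub_eq_mul r hint
    (a := a) (b := b) (by rintro rfl; exact huv (hι (ha.symm.trans hb)))
  refine IsIntegrallyClosed.dvd_of_algebraMap_eq_mul_isIntegral (K := K)
    (pow_ne_zero 2 (sub_ne_zero.mpr huv)) hQ ?_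
  rw [hΔ L ι r hι hr, hΔQ, ha, hb, map_pow, map_sub]

theorem separation_of_roots_general {k s : ℕ}
    (P : Polynomial (PowerSeries ℂ)) (hP : P.Monic) (hdeg : P.natDegree = k)
    (Δ : PowerSeries ℂ)
    -- `Δ` is the discriminant of `P`: in any field where `P` splits with roots
    -- `r₁,…,r_k`, it equals the product over pairs of squared root differences
    (hΔ : ∀ (L : Type) [Field L], ∀ (ι : PowerSeries ℂ →+* L) (r : Fin k → L),
      Function.Injective ι →
      P.map ι = ∏ j : Fin k, (Polynomial.X - Polynomial.C (r j)) →
      ι Δ = ∏ j : Fin k, ∏ j' ∈ Finset.univ.filter (fun j' => j' < j),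
        (r j' - r j) ^ 2)
    (hΔord : pOrd Δ ≤ (s : ℕ∞))
    (u v : PowerSeries ℂ)
    (hu : Polynomial.eval u P = 0) (hv : Polynomial.eval v P = 0)
    (hsep : (s : ℕ∞) < pOrd (u - v)) :
    u = v := by
  by_contra huv
  have hdvd : u - v ∣ Δ :=
    (dvd_pow_self _ two_ne_zero).trans (sq_sub_dvd_of_eval_eq_zero hP hdeg hΔ hu hv huv)
  rw [pOrd_eq_order] at hΔord hsep
  exact (hsep.trans_le (PowerSeries.order_le_order_of_dvd hdvd)).not_ge hΔord

theorem separation_of_roots {k s : ℕ} (hk : 1 ≤ k)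
    (P : Polynomial (PowerSeries ℂ)) (hP : P.Monic) (hdeg : P.natDegree = k)
    (Δ : PowerSeries ℂ) (hΔ0 : Δ ≠ 0)
    -- `Δ` is the discriminant of `P`: in any field where `P` splits with roots
    -- `r₁,…,r_k`, it equals the product over pairs of squared root differences
    (hΔ : ∀ (L : Type) [Field L], ∀ (ι : PowerSeries ℂ →+* L) (r : Fin k → L),
      Function.Injective ι →
      P.map ι = ∏ j : Fin k, (Polynomial.X - Polynomial.C (r j)) →
      ι Δ = ∏ j : Fin k, ∏ j' ∈ Finset.univ.filter (fun j' => j' < j),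
        (r j' - r j) ^ 2)
    (hΔord : pOrd Δ ≤ (s : ℕ∞))
    (u v : PowerSeries ℂ)
    (hu : Polynomial.eval u P = 0) (hv : Polynomial.eval v P = 0)
    (hsep : (s : ℕ∞) < pOrd (u - v)) :
    u = v :=
  separation_of_roots_general P hP hdeg Δ hΔ hΔord u v hu hv hsep
end
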